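/- arXiv:2501.07446 — 2 statements merged into one kernel-verified Lean document; each statement's English description precedes it below -/
import Mathlib

section
/- Let Ω ⊆ ℝ^d be a nonempty closed set and let F : P₂(Ω) → ℝ admit a minimizer μ* ∈ P₂(Ω). Suppose F admits a derivative at μ*: there is a continuous δ : ℝ^d → ℝ, integrable with respect to μ* and to every ρ ∈ P₂(Ω), such that for every ρ ∈ P₂(Ω), lim_{t→0⁺} (F(μ* + t(ρ−μ*)) − F(μ*))/t = ∫ δ dρ − ∫ δ dμ*. Let c* := inf_{x ∈ Ω} δ(x). Then c* > −∞, and δ(x) = c* for every x in the support of μ*. -/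
open MeasureTheory ENNReal Filter
open scoped Topology

/-- `μ ∈ P₂(Ω)`: a Borel probability measure supported in `Ω` with finite second moment. -/
def MemP2 {d : ℕ} (μ : Measure (EuclideanSpace ℝ (Fin d)))
    (Ω : Set (EuclideanSpace ℝ (Fin d))) : Prop :=
  IsProbabilityMeasure μ ∧ μ Ωᶜ = 0 ∧ Integrable (fun x => ‖x‖ ^ 2) μ

/-- The (topological) support of a measure: points all of whose open neighbourhoods have
nonzero measure. -/
def msupport {d : ℕ} (μ : Measure (EuclideanSpace ℝ (Fin d))) :
    Set (EuclideanSpace ℝ (Fin d)) :=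
  {x | ∀ U : Set (EuclideanSpace ℝ (Fin d)), IsOpen U → x ∈ U → μ U ≠ 0}

/-!
Testing the minimality of `μ*` against its mixtures with the Dirac mass at `y` gives the
first-order condition `∫ δ dμ* ≤ δ y` for every `y ∈ Ω`. In particular `δ` is bounded below on
`Ω`, and `δ ≥ ∫ δ dμ*` holds `μ*`-a.e.; since the average of `δ` is `∫ δ dμ*`, equality holds
`μ*`-a.e. By continuity of `δ` this equality holds on the whole support, which lies in
`closure Ω`, so `∫ δ dμ*` is the infimum of `δ` on `Ω`.
-/

theorem nonneg_of_tendsto_slope_nhdsGT {g : ℝ → ℝ} {a L : ℝ}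
    (hmin : ∀ᶠ t in 𝓝[>] 0, a ≤ g t)
    (hslope : Tendsto (fun t => (g t - a) / t) (𝓝[>] 0) (𝓝 L)) : 0 ≤ L :=
  ge_of_tendsto hslope <| by
    filter_upwards [hmin, self_mem_nhdsWithin] with t hat ht
    exact div_nonneg (sub_nonneg.2 hat) (le_of_lt ht)

section P2

variable {d : ℕ} {Ω : Set (EuclideanSpace ℝ (Fin d))}

theorem MemP2.mix {μ ρ : Measure (EuclideanSpace ℝ (Fin d))} (hμ : MemP2 μ Ω)
    (hρ : MemP2 ρ Ω) {t : ℝ} (ht₀ : 0 ≤ t) (ht₁ : t ≤ 1) :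
    MemP2 (ENNReal.ofReal (1 - t) • μ + ENNReal.ofReal t • ρ) Ω := by
  obtain ⟨hμprob, hμΩ, hμmom⟩ := hμ
  obtain ⟨hρprob, hρΩ, hρmom⟩ := hρ
  refine ⟨⟨?_⟩, by simp [hμΩ, hρΩ], ?_⟩
  · simp only [Measure.add_apply, Measure.smul_apply, smul_eq_mul, measure_univ, mul_one]
    rw [← ENNReal.ofReal_add (by linarith) ht₀]
    norm_num
  · exact (hμmom.smul_measure ofReal_ne_top).add_measure (hρmom.smul_measure ofReal_ne_top)

theorem memP2_dirac {y : EuclideanSpace ℝ (Fin d)} (hy : y ∈ Ω) :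
    MemP2 (Measure.dirac y) Ω :=
  ⟨inferInstance, by simp [Measure.dirac_apply, hy],
    (integrable_const (‖y‖ ^ 2)).congr (ae_eq_dirac fun x => ‖x‖ ^ 2).symm⟩

theorem integral_le_integral_of_isMinimizer {F : Measure (EuclideanSpace ℝ (Fin d)) → ℝ}
    {μ ρ : Measure (EuclideanSpace ℝ (Fin d))} {δ : EuclideanSpace ℝ (Fin d) → ℝ}
    (hμ : MemP2 μ Ω) (hmin : ∀ ν, MemP2 ν Ω → F μ ≤ F ν) (hρ : MemP2 ρ Ω)
    (hderiv : Tendsto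
      (fun t : ℝ => (F (ENNReal.ofReal (1 - t) • μ + ENNReal.ofReal t • ρ) - F μ) / t)
      (𝓝[>] 0) (𝓝 ((∫ x, δ x ∂ρ) - ∫ x, δ x ∂μ))) :
    ∫ x, δ x ∂μ ≤ ∫ x, δ x ∂ρ := by
  refine sub_nonneg.1 (nonneg_of_tendsto_slope_nhdsGT ?_ hderiv)
  filter_upwards [Ioo_mem_nhdsGT zero_lt_one] with t ht
  exact hmin _ (hμ.mix hρ ht.1.le ht.2.le)

theorem mem_closure_of_mem_msupport {μ : Measure (EuclideanSpace ℝ (Fin d))}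
    (hμΩ : μ Ωᶜ = 0) {x : EuclideanSpace ℝ (Fin d)} (hx : x ∈ msupport μ) : x ∈ closure Ω := by
  by_contra hxΩ
  exact hx _ isClosed_closure.isOpen_compl hxΩ
    (measure_mono_null (Set.compl_subset_compl.2 subset_closure) hμΩ)

theorem apply_eq_of_mem_msupport {μ : Measure (EuclideanSpace ℝ (Fin d))}
    {f : EuclideanSpace ℝ (Fin d) → ℝ} (hf : Continuous f) {c : ℝ} (hfc : f =ᵐ[μ] fun _ => c)
    {x : EuclideanSpace ℝ (Fin d)} (hx : x ∈ msupport μ) : f x = c := by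
  by_contra hne
  exact hx {y | f y ≠ c} (isOpen_ne_fun hf continuous_const) hne (ae_iff.1 hfc)

end P2

theorem derivative_constant_on_support_of_minimizer_general
    {d : ℕ} (Ω : Set (EuclideanSpace ℝ (Fin d)))
    (F : Measure (EuclideanSpace ℝ (Fin d)) → ℝ)
    (μstar : Measure (EuclideanSpace ℝ (Fin d))) (hμstar : MemP2 μstar Ω)
    (hmin : ∀ μ, MemP2 μ Ω → F μstar ≤ F μ)
    (δ : EuclideanSpace ℝ (Fin d) → ℝ) (hδcont : Continuous δ)
    (hδint : Integrable δ μstar)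
    (hderiv : ∀ ρ : Measure (EuclideanSpace ℝ (Fin d)), MemP2 ρ Ω →
      Tendsto
        (fun t : ℝ =>
          (F (ENNReal.ofReal (1 - t) • μstar + ENNReal.ofReal t • ρ) - F μstar) / t)
        (𝓝[>] (0 : ℝ)) (𝓝 ((∫ x, δ x ∂ρ) - ∫ x, δ x ∂μstar))) :
    BddBelow (δ '' Ω) ∧ ∀ x ∈ msupport μstar, δ x = sInf (δ '' Ω) := by
  set I := ∫ x, δ x ∂μstar
  have hI_lower : I ∈ lowerBounds (δ '' Ω) := by
    rintro _ ⟨y, hy, rfl⟩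
    simpa using integral_le_integral_of_isMinimizer hμstar hmin (memP2_dirac hy)
      (hderiv _ (memP2_dirac hy))
  have : IsProbabilityMeasure μstar := hμstar.1
  have hI_le : (fun _ => I) ≤ᵐ[μstar] δ := by
    filter_upwards [ae_iff.2 hμstar.2.1] with x hx
    exact hI_lower ⟨x, hx, rfl⟩
  have hδ_ae : δ =ᵐ[μstar] fun _ => I :=
    ((integral_eq_iff_of_ae_le (integrable_const I) hδint hI_le).1 (by simp [I])).symm
  refine ⟨⟨I, hI_lower⟩, fun x hx => ?_⟩
  have hδx : δ x = I := apply_eq_of_mem_msupport hδcont hδ_ae hx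
  have hxΩ : x ∈ closure Ω := mem_closure_of_mem_msupport hμstar.2.1 hx
  refine (IsGLB.csInf_eq ?_ ((closure_nonempty_iff.1 ⟨x, hxΩ⟩).image δ)).symm
  exact isGLB_of_mem_closure (hδx ▸ hI_lower)
    (image_closure_subset_closure_image hδcont ⟨x, hxΩ, rfl⟩)

/-- At a minimizer `μ*` of a differentiable functional on `P₂(Ω)`, the derivative `δ`
is bounded below on `Ω` and equals its infimum `c* = inf_{x ∈ Ω} δ(x)` on the support
of `μ*`. -/
theorem derivative_constant_on_support_of_minimizer
    {d : ℕ} (Ω : Set (EuclideanSpace ℝ (Fin d)))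
    (hΩne : Ω.Nonempty) (hΩcl : IsClosed Ω)
    (F : Measure (EuclideanSpace ℝ (Fin d)) → ℝ)
    (μstar : Measure (EuclideanSpace ℝ (Fin d))) (hμstar : MemP2 μstar Ω)
    (hmin : ∀ μ, MemP2 μ Ω → F μstar ≤ F μ)
    (δ : EuclideanSpace ℝ (Fin d) → ℝ) (hδcont : Continuous δ)
    (hδint : Integrable δ μstar) (hδint' : ∀ ρ, MemP2 ρ Ω → Integrable δ ρ)
    (hderiv : ∀ ρ : Measure (EuclideanSpace ℝ (Fin d)), MemP2 ρ Ω →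
      Tendsto
        (fun t : ℝ =>
          (F (ENNReal.ofReal (1 - t) • μstar + ENNReal.ofReal t • ρ) - F μstar) / t)
        (𝓝[>] (0 : ℝ)) (𝓝 ((∫ x, δ x ∂ρ) - ∫ x, δ x ∂μstar))) :
    BddBelow (δ '' Ω) ∧ ∀ x ∈ msupport μstar, δ x = sInf (δ '' Ω) :=
  derivative_constant_on_support_of_minimizer_general Ω F μstar hμstar hmin δ hδcont hδint hderiv
end

section
/- Let Ω ⊆ ℝ^d be a nonempty closed set, let ν₁,…,ν_m ∈ P₂(Ω), let λ ∈ Δ^m and ε > 0, and let F^ε_{λ,V}(μ) := ∑_{j=1}^m λ_j · OT₂^ε(μ, ν_j). Then every infimizing sequence for F^ε_{λ,V} is tight: if (μ_n) ⊆ P₂(Ω) satisfies F^ε_{λ,V}(μ_n) → inf_{μ ∈ P₂(Ω)} F^ε_{λ,V}(μ), then for every δ > 0 there exists a compact set K ⊆ Ω such that μ_n(Ω ∖ K) < δ for all n. -/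
open MeasureTheory ENNReal Filter
open scoped Classical Topology

/-- Kullback–Leibler divergence between two measures. -/
noncomputable def KLdiv {α : Type*} [MeasurableSpace α] (ζ π : Measure α) : ℝ≥0∞ :=
  if ζ ≪ π ∧ Integrable (fun x => Real.log ((ζ.rnDeriv π x).toReal)) ζ then
    ENNReal.ofReal (∫ x, Real.log ((ζ.rnDeriv π x).toReal) ∂ζ)
  else ⊤

/-- The entropy-regularized Wasserstein-2 cost `OT₂^ε(μ, ν)`. -/
noncomputable def entOT {d : ℕ} (ε : ℝ) (μ ν : Measure (EuclideanSpace ℝ (Fin d))) : ℝ≥0∞ :=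
  ⨅ (ζ : Measure (EuclideanSpace ℝ (Fin d) × EuclideanSpace ℝ (Fin d)))
    (_ : ζ.map Prod.fst = μ ∧ ζ.map Prod.snd = ν),
      (∫⁻ p, ENNReal.ofReal ((1 / 2 : ℝ) * ‖p.1 - p.2‖ ^ 2) ∂ζ)
        + ENNReal.ofReal ε * KLdiv ζ (μ.prod ν)

/-!
Along any coupling of `μ` and `ν`, `‖x‖² ≤ 2‖x - y‖² + 2‖y‖²`, so the second moment of `μ` is
at most `4 OT₂^ε(μ, ν) + 2 M₂(ν)`. Averaging over `j` with weights `λ_j` bounds `M₂(μ)` by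
`4 F(μ) + const`. The infimum of `F` is finite (the product coupling has finite cost and zero
entropy), so the second moments of an infimizing sequence are eventually, hence uniformly,
bounded, and Markov's inequality on `{‖x‖² ≥ n}` yields tightness.
-/

lemma norm_add_sq_le {E : Type*} [SeminormedAddCommGroup E] (a b : E) :
    ‖a + b‖ ^ 2 ≤ 2 * ‖a‖ ^ 2 + 2 * ‖b‖ ^ 2 :=
  calc ‖a + b‖ ^ 2 ≤ (‖a‖ + ‖b‖) ^ 2 := pow_le_pow_left₀ (norm_nonneg _) (norm_add_le a b) 2
    _ ≤ 2 * ‖a‖ ^ 2 + 2 * ‖b‖ ^ 2 := by linarith [add_sq_le (a := ‖a‖) (b := ‖b‖)]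

section Marginals

variable {α β : Type*} [MeasurableSpace α] [MeasurableSpace β] {ζ : Measure (α × β)}

lemma lintegral_comp_fst_of_map_fst_eq {μ : Measure α} (h : ζ.map Prod.fst = μ)
    {f : α → ℝ≥0∞} (hf : Measurable f) : ∫⁻ p, f p.1 ∂ζ = ∫⁻ x, f x ∂μ := by
  rw [← h, lintegral_map hf measurable_fst]

lemma lintegral_comp_snd_of_map_snd_eq {ν : Measure β} (h : ζ.map Prod.snd = ν)
    {f : β → ℝ≥0∞} (hf : Measurable f) : ∫⁻ p, f p.2 ∂ζ = ∫⁻ y, f y ∂ν := by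
  rw [← h, lintegral_map hf measurable_snd]

end Marginals

section SecondMoment

variable {E : Type*} [NormedAddCommGroup E] [MeasurableSpace E]

noncomputable def secondMoment (μ : Measure E) : ℝ≥0∞ :=
  ∫⁻ x, ENNReal.ofReal (‖x‖ ^ 2) ∂μ

lemma secondMoment_lt_top {μ : Measure E} (h : Integrable (fun x => ‖x‖ ^ 2) μ) :
    secondMoment μ < ∞ :=
  h.lintegral_lt_top

variable [OpensMeasurableSpace E]

lemma measurable_ofReal_norm_sq : Measurable fun x : E => ENNReal.ofReal (‖x‖ ^ 2) :=
  (ENNReal.continuous_ofReal.comp (continuous_norm.pow 2)).measurable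

lemma secondMoment_le_of_coupling {ζ : Measure (E × E)} {μ ν : Measure E}
    (hμ : ζ.map Prod.fst = μ) (hν : ζ.map Prod.snd = ν) :
    secondMoment μ ≤
      4 * ∫⁻ p, ENNReal.ofReal ((1 / 2 : ℝ) * ‖p.1 - p.2‖ ^ 2) ∂ζ + 2 * secondMoment ν := by
  have hsnd : Measurable fun p : E × E => ENNReal.ofReal (‖p.2‖ ^ 2) :=
    measurable_ofReal_norm_sq.comp measurable_snd
  calc secondMoment μ = ∫⁻ p, ENNReal.ofReal (‖p.1‖ ^ 2) ∂ζ :=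
        (lintegral_comp_fst_of_map_fst_eq hμ measurable_ofReal_norm_sq).symm
    _ ≤ ∫⁻ p, (4 * ENNReal.ofReal ((1 / 2 : ℝ) * ‖p.1 - p.2‖ ^ 2)
          + 2 * ENNReal.ofReal (‖p.2‖ ^ 2)) ∂ζ := by
        refine lintegral_mono fun p => ?_
        rw [← ENNReal.ofReal_ofNat 4, ← ENNReal.ofReal_ofNat 2, ← ENNReal.ofReal_mul (by norm_num),
          ← ENNReal.ofReal_mul (by norm_num), ← ENNReal.ofReal_add (by positivity) (by positivity)]
        refine ENNReal.ofReal_le_ofReal ?_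
        have := norm_add_sq_le (p.1 - p.2) p.2
        rw [sub_add_cancel] at this
        linarith
    _ = 4 * ∫⁻ p, ENNReal.ofReal ((1 / 2 : ℝ) * ‖p.1 - p.2‖ ^ 2) ∂ζ + 2 * secondMoment ν := by
        rw [lintegral_add_right' _ (hsnd.const_mul 2).aemeasurable,
          lintegral_const_mul' _ _ (by simp), lintegral_const_mul _ hsnd,
          lintegral_comp_snd_of_map_snd_eq hν measurable_ofReal_norm_sq, secondMoment]

lemma lintegral_cost_le_of_coupling {ζ : Measure (E × E)} {μ ν : Measure E}
    (hμ : ζ.map Prod.fst = μ) (hν : ζ.map Prod.snd = ν) :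
    ∫⁻ p, ENNReal.ofReal ((1 / 2 : ℝ) * ‖p.1 - p.2‖ ^ 2) ∂ζ ≤ secondMoment μ + secondMoment ν :=
  calc ∫⁻ p, ENNReal.ofReal ((1 / 2 : ℝ) * ‖p.1 - p.2‖ ^ 2) ∂ζ
      ≤ ∫⁻ p, (ENNReal.ofReal (‖p.1‖ ^ 2) + ENNReal.ofReal (‖p.2‖ ^ 2)) ∂ζ := by
        refine lintegral_mono fun p => ?_
        rw [← ENNReal.ofReal_add (by positivity) (by positivity)]
        refine ENNReal.ofReal_le_ofReal ?_
        have := norm_add_sq_le p.1 (-p.2)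
        rw [norm_neg, ← sub_eq_add_neg] at this
        linarith
    _ = secondMoment μ + secondMoment ν := by
        have hfst : Measurable fun p : E × E => ENNReal.ofReal (‖p.1‖ ^ 2) :=
          measurable_ofReal_norm_sq.comp measurable_fst
        rw [lintegral_add_left hfst,
          lintegral_comp_fst_of_map_fst_eq hμ measurable_ofReal_norm_sq,
          lintegral_comp_snd_of_map_snd_eq hν measurable_ofReal_norm_sq, secondMoment, secondMoment]

lemma exists_isCompact_measure_diff_lt_of_secondMoment_le [ProperSpace E] {ι : Type*}
    {μ : ι → Measure E} {B : ℝ≥0∞} (hB : B ≠ ∞) (hμ : ∀ i, secondMoment (μ i) ≤ B)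
    {Ω : Set E} (hΩ : IsClosed Ω) {δ : ℝ≥0∞} (hδ : 0 < δ) :
    ∃ K ⊆ Ω, IsCompact K ∧ ∀ i, μ i (Ω \ K) < δ := by
  have hlim : Tendsto (fun n : ℕ => B / n) atTop (𝓝 0) := by
    simpa [div_eq_mul_inv] using
      ENNReal.Tendsto.const_mul ENNReal.tendsto_inv_nat_nhds_zero (Or.inr hB)
  obtain ⟨n, hn, hn1⟩ := ((hlim.eventually (gt_mem_nhds hδ)).and (eventually_ge_atTop 1)).exists
  refine ⟨Ω ∩ Metric.closedBall 0 √n, Set.inter_subset_left,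
    (isCompact_closedBall 0 _).inter_left hΩ, fun i => ?_⟩
  have hsub : Ω \ (Ω ∩ Metric.closedBall 0 √n) ⊆ {x | (n : ℝ≥0∞) ≤ ENNReal.ofReal (‖x‖ ^ 2)} := by
    rintro x ⟨hxΩ, hx⟩
    have hxn : √n < ‖x‖ := by simpa [hxΩ] using hx
    rw [Set.mem_ofPred_eq, ← ENNReal.ofReal_natCast]
    exact ENNReal.ofReal_le_ofReal (Real.lt_sq_of_sqrt_lt hxn).le
  calc μ i (Ω \ (Ω ∩ Metric.closedBall 0 √n))
      ≤ μ i {x | (n : ℝ≥0∞) ≤ ENNReal.ofReal (‖x‖ ^ 2)} := measure_mono hsub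
    _ ≤ secondMoment (μ i) / n :=
        meas_ge_le_lintegral_div measurable_ofReal_norm_sq.aemeasurable
          (by exact_mod_cast (by omega : n ≠ 0)) (ENNReal.natCast_ne_top n)
    _ ≤ B / n := by gcongr; exact hμ i
    _ < δ := hn

end SecondMoment

lemma ENNReal.exists_ne_top_forall_le_of_eventually_le {u : ℕ → ℝ≥0∞} (hu : ∀ n, u n ≠ ∞)
    {b : ℝ≥0∞} (hb : b ≠ ∞) (h : ∀ᶠ n in atTop, u n ≤ b) : ∃ B ≠ ∞, ∀ n, u n ≤ B := by
  obtain ⟨N, hN⟩ := eventually_atTop.1 h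
  refine ⟨(Finset.range N).sup u ⊔ b, ?_, fun n => ?_⟩
  · exact (sup_lt_iff.2 ⟨(Finset.sup_lt_iff bot_lt_top).2 fun n _ => (hu n).lt_top,
      hb.lt_top⟩).ne
  · rcases lt_or_ge n N with hn | hn
    · exact le_sup_of_le_left (Finset.le_sup (Finset.mem_range.2 hn))
    · exact le_sup_of_le_right (hN n hn)

lemma KLdiv_self {α : Type*} [MeasurableSpace α] (μ : Measure α) [SigmaFinite μ] :
    KLdiv μ μ = 0 := by
  have hlog : (fun x => Real.log ((μ.rnDeriv μ x).toReal)) =ᵐ[μ] 0 := by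
    filter_upwards [μ.rnDeriv_self] with x hx
    simp [hx]
  rw [KLdiv, if_pos ⟨.rfl, (integrable_zero _ _ _).congr hlog.symm⟩, integral_congr_ae hlog]
  simp

section EntropicOT

variable {d : ℕ}

lemma secondMoment_le_entOT (ε : ℝ) (μ ν : Measure (EuclideanSpace ℝ (Fin d))) :
    secondMoment μ ≤ 4 * entOT ε μ ν + 2 * secondMoment ν := by
  rw [← tsub_le_iff_right, entOT, ENNReal.mul_iInf_of_ne (by norm_num) (by norm_num)]
  refine le_iInf fun ζ => ?_
  rw [ENNReal.mul_iInf_of_ne (by norm_num) (by norm_num)]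
  refine le_iInf fun hζ => tsub_le_iff_right.2 ?_
  calc secondMoment μ
      ≤ 4 * ∫⁻ p, ENNReal.ofReal ((1 / 2 : ℝ) * ‖p.1 - p.2‖ ^ 2) ∂ζ + 2 * secondMoment ν :=
        secondMoment_le_of_coupling hζ.1 hζ.2
    _ ≤ _ := by gcongr; exact le_self_add

lemma entOT_lt_top (ε : ℝ) {μ ν : Measure (EuclideanSpace ℝ (Fin d))}
    [IsProbabilityMeasure μ] [IsProbabilityMeasure ν]
    (hμ : secondMoment μ < ∞) (hν : secondMoment ν < ∞) : entOT ε μ ν < ∞ := by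
  have hfst : (μ.prod ν).map Prod.fst = μ := by simp
  have hsnd : (μ.prod ν).map Prod.snd = ν := by simp
  refine (iInf₂_le (μ.prod ν) ⟨hfst, hsnd⟩).trans_lt ?_
  rw [KLdiv_self, mul_zero, add_zero]
  exact (lintegral_cost_le_of_coupling hfst hsnd).trans_lt (ENNReal.add_lt_top.2 ⟨hμ, hν⟩)

variable {ι : Type*} [Fintype ι]

noncomputable def entBarycenterObjective (ε : ℝ) (lam : ι → ℝ)
    (ν : ι → Measure (EuclideanSpace ℝ (Fin d))) (μ : Measure (EuclideanSpace ℝ (Fin d))) :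
    ℝ≥0∞ :=
  ∑ j, ENNReal.ofReal (lam j) * entOT ε μ (ν j)

lemma entBarycenterObjective_lt_top (ε : ℝ) (lam : ι → ℝ)
    {ν : ι → Measure (EuclideanSpace ℝ (Fin d))} {μ : Measure (EuclideanSpace ℝ (Fin d))}
    {Ω : Set (EuclideanSpace ℝ (Fin d))} (hν : ∀ j, MemP2 (ν j) Ω) (hμ : MemP2 μ Ω) :
    entBarycenterObjective ε lam ν μ < ∞ := by
  have := hμ.1
  refine ENNReal.sum_lt_top.2 fun j _ => ENNReal.mul_lt_top ENNReal.ofReal_lt_top ?_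
  have := (hν j).1
  exact entOT_lt_top ε (secondMoment_lt_top hμ.2.2) (secondMoment_lt_top (hν j).2.2)

lemma secondMoment_le_entBarycenterObjective (ε : ℝ) {lam : ι → ℝ} (hlam0 : ∀ j, 0 ≤ lam j)
    (hlam1 : ∑ j, lam j = 1) (ν : ι → Measure (EuclideanSpace ℝ (Fin d)))
    (μ : Measure (EuclideanSpace ℝ (Fin d))) :
    secondMoment μ ≤ 4 * entBarycenterObjective ε lam ν μ
      + 2 * ∑ j, ENNReal.ofReal (lam j) * secondMoment (ν j) :=
  calc secondMoment μ = ∑ j, ENNReal.ofReal (lam j) * secondMoment μ := by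
        rw [← Finset.sum_mul, ← ENNReal.ofReal_sum_of_nonneg fun j _ => hlam0 j, hlam1,
          ENNReal.ofReal_one, one_mul]
    _ ≤ ∑ j, ENNReal.ofReal (lam j) * (4 * entOT ε μ (ν j) + 2 * secondMoment (ν j)) := by
        gcongr with j
        exact secondMoment_le_entOT ε μ (ν j)
    _ = 4 * entBarycenterObjective ε lam ν μ
          + 2 * ∑ j, ENNReal.ofReal (lam j) * secondMoment (ν j) := by
        simp only [entBarycenterObjective, mul_add, Finset.sum_add_distrib, Finset.mul_sum,
          mul_left_comm _ (4 : ℝ≥0∞), mul_left_comm _ (2 : ℝ≥0∞)]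

end EntropicOT

theorem infimizing_sequence_tight_general
    {d m : ℕ} (Ω : Set (EuclideanSpace ℝ (Fin d)))
    (hΩcl : IsClosed Ω)
    (ν : Fin m → Measure (EuclideanSpace ℝ (Fin d))) (hν : ∀ j, MemP2 (ν j) Ω)
    (lam : Fin m → ℝ) (hlam0 : ∀ j, 0 ≤ lam j) (hlam1 : ∑ j, lam j = 1)
    (ε : ℝ)
    (μseq : ℕ → Measure (EuclideanSpace ℝ (Fin d))) (hμseq : ∀ n, MemP2 (μseq n) Ω)
    (hinf : Tendsto (fun n => ∑ j, ENNReal.ofReal (lam j) * entOT ε (μseq n) (ν j))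
      atTop
      (𝓝 (⨅ (μ : Measure (EuclideanSpace ℝ (Fin d))) (_ : MemP2 μ Ω),
        ∑ j, ENNReal.ofReal (lam j) * entOT ε μ (ν j)))) :
    ∀ δ : ℝ≥0∞, 0 < δ →
      ∃ K : Set (EuclideanSpace ℝ (Fin d)), K ⊆ Ω ∧ IsCompact K ∧
        ∀ n, μseq n (Ω \ K) < δ := by
  intro δ hδ
  set F := entBarycenterObjective ε lam ν
  set I := ⨅ (μ : Measure (EuclideanSpace ℝ (Fin d))) (_ : MemP2 μ Ω), F μ
  set C := ∑ j, ENNReal.ofReal (lam j) * secondMoment (ν j)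
  have hI : I < ∞ :=
    (iInf₂_le (μseq 0) (hμseq 0)).trans_lt (entBarycenterObjective_lt_top ε lam hν (hμseq 0))
  have hC : C < ∞ := ENNReal.sum_lt_top.2 fun j _ =>
    ENNReal.mul_lt_top ENNReal.ofReal_lt_top (secondMoment_lt_top (hν j).2.2)
  have hF : ∀ᶠ n in atTop, F (μseq n) ≤ I + 1 :=
    (hinf.eventually_lt_const (ENNReal.lt_add_right hI.ne one_ne_zero)).mono fun _ => le_of_lt
  obtain ⟨B, hB, hbound⟩ := ENNReal.exists_ne_top_forall_le_of_eventually_le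
    (fun n => (secondMoment_lt_top (hμseq n).2.2).ne) (b := 4 * (I + 1) + 2 * C)
    (by finiteness) (hF.mono fun n hn =>
      (secondMoment_le_entBarycenterObjective ε hlam0 hlam1 ν (μseq n)).trans (by gcongr))
  exact exists_isCompact_measure_diff_lt_of_secondMoment_le hB hbound hΩcl hδ

/-- Every infimizing sequence for the entropic barycenter functional `F^ε_{λ,V}`
on `P₂(Ω)` is tight. -/
theorem infimizing_sequence_tight
    {d m : ℕ} (Ω : Set (EuclideanSpace ℝ (Fin d)))
    (hΩne : Ω.Nonempty) (hΩcl : IsClosed Ω)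
    (ν : Fin m → Measure (EuclideanSpace ℝ (Fin d))) (hν : ∀ j, MemP2 (ν j) Ω)
    (lam : Fin m → ℝ) (hlam0 : ∀ j, 0 ≤ lam j) (hlam1 : ∑ j, lam j = 1)
    (ε : ℝ) (hε : 0 < ε)
    (μseq : ℕ → Measure (EuclideanSpace ℝ (Fin d))) (hμseq : ∀ n, MemP2 (μseq n) Ω)
    (hinf : Tendsto (fun n => ∑ j, ENNReal.ofReal (lam j) * entOT ε (μseq n) (ν j))
      atTop
      (𝓝 (⨅ (μ : Measure (EuclideanSpace ℝ (Fin d))) (_ : MemP2 μ Ω),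
        ∑ j, ENNReal.ofReal (lam j) * entOT ε μ (ν j)))) :
    ∀ δ : ℝ≥0∞, 0 < δ →
      ∃ K : Set (EuclideanSpace ℝ (Fin d)), K ⊆ Ω ∧ IsCompact K ∧
        ∀ n, μseq n (Ω \ K) < δ :=
  infimizing_sequence_tight_general Ω hΩcl ν hν lam hlam0 hlam1 ε μseq hμseq hinf
end
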